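/- Let q > 0, a > 0, and let f : I → ℝ be a twice differentiable function on an open interval I containing 0, with f(t) > 0 for all t ∈ I, satisfying the ODE f''(t) = q · coth(f(t)) · (1 + f'(t)²) with initial conditions f(0) = a and f'(0) = 0. Then for all t ∈ I one has sinh(f(t))^q = sinh(a)^q · √(1 + f'(t)²), equivalently sinh(f(t))^q / √(1 + f'(t)²) = sinh(a)^q. -/

import Mathlib

/-! Along a solution with `f > 0`, the quantity `q log sinh f - ½ log (1 + f'²)` has derivative
`f' (q coth f - f'' / (1 + f'²))`, which the ODE makes vanish. It is therefore constant on the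
interval, equal to its value `q log sinh a` at `0`, and exponentiating gives the identity. -/

open Real

theorem Convex.eq_of_forall_hasDerivAt_zero {s : Set ℝ} (hs : Convex ℝ s) {g : ℝ → ℝ}
    (hg : ∀ x ∈ s, HasDerivAt g 0 x) {x y : ℝ} (hx : x ∈ s) (hy : y ∈ s) : g x = g y := by
  have := hs.norm_image_sub_le_of_norm_hasDerivWithin_le
    (fun z hz => (hg z hz).hasDerivWithinAt) (fun _ _ => norm_zero.le) hx hy
  rwa [zero_mul, norm_le_zero_iff, sub_eq_zero, eq_comm] at this

/-- The first integral of `f'' = q coth f (1 + f'²)`, as a function of position `x` and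
velocity `v`. -/
noncomputable def firstIntegral (q x v : ℝ) : ℝ :=
  q * log (sinh x) - log (1 + v ^ 2) / 2

theorem hasDerivAt_firstIntegral {q t x' v' : ℝ} {x v : ℝ → ℝ} (hx : HasDerivAt x x' t)
    (hv : HasDerivAt v v' t) (hpos : 0 < x t) :
    HasDerivAt (fun t => firstIntegral q (x t) (v t))
      (q * (cosh (x t) / sinh (x t)) * x' - v t * v' / (1 + v t ^ 2)) t := by
  have hsinh : sinh (x t) ≠ 0 := (sinh_pos_iff.2 hpos).ne'
  have hlog_sinh := (hx.sinh.log hsinh).const_mul q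
  have hlog_energy := (((hv.fun_pow 2).const_add 1).log (by positivity)).div_const 2
  refine (hlog_sinh.sub hlog_energy).congr_deriv ?_
  field_simp
  ring

theorem hasDerivAt_firstIntegral_eq_zero {q t : ℝ} {f f' f'' : ℝ → ℝ}
    (hf' : HasDerivAt f (f' t) t) (hf'' : HasDerivAt f' (f'' t) t) (hpos : 0 < f t)
    (hode : f'' t = q * (cosh (f t) / sinh (f t)) * (1 + f' t ^ 2)) :
    HasDerivAt (fun t => firstIntegral q (f t) (f' t)) 0 t := by
  convert hasDerivAt_firstIntegral hf' hf'' hpos using 1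
  rw [hode, mul_div_assoc, mul_div_cancel_right₀ _ (by positivity)]
  ring

theorem rpow_eq_rpow_mul_sqrt_of_firstIntegral_eq {q x a v : ℝ} (hx : 0 < x) (ha : 0 < a)
    (h : firstIntegral q x v = firstIntegral q a 0) :
    sinh x ^ q = sinh a ^ q * sqrt (1 + v ^ 2) := by
  have hlog : q * log (sinh x) = q * log (sinh a) + log (1 + v ^ 2) / 2 := by
    simp only [firstIntegral, zero_pow two_ne_zero, add_zero, log_one, zero_div, sub_zero] at h
    linarith
  rw [rpow_def_of_pos (sinh_pos_iff.2 hx), rpow_def_of_pos (sinh_pos_iff.2 ha), mul_comm _ q,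
    hlog, exp_add, mul_comm q, ← log_sqrt (by positivity), exp_log (by positivity)]

/-- First integral (CP1) of the Cauchy problem
`f'' = q coth(f)(1+f'²)`, `f(0)=a`, `f'(0)=0`:
`sinh(f(t))^q = sinh(a)^q √(1+f'(t)²)` for all `t ∈ I`. -/
theorem stmt_1 (q a : ℝ)
    (I : Set ℝ) (hIconv : Convex ℝ I) (h0 : (0 : ℝ) ∈ I)
    (f f' f'' : ℝ → ℝ)
    (hf' : ∀ t ∈ I, HasDerivAt f (f' t) t)
    (hf'' : ∀ t ∈ I, HasDerivAt f' (f'' t) t)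
    (hpos : ∀ t ∈ I, 0 < f t)
    (hode : ∀ t ∈ I, f'' t = q * (Real.cosh (f t) / Real.sinh (f t)) * (1 + f' t ^ 2))
    (hfa : f 0 = a) (hf'0 : f' 0 = 0) :
    ∀ t ∈ I, Real.sinh (f t) ^ q = Real.sinh a ^ q * Real.sqrt (1 + f' t ^ 2) := by
  intro t ht
  have hconst : firstIntegral q (f t) (f' t) = firstIntegral q (f 0) (f' 0) :=
    hIconv.eq_of_forall_hasDerivAt_zero
      (fun s hs => hasDerivAt_firstIntegral_eq_zero (hf' s hs) (hf'' s hs) (hpos s hs) (hode s hs))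
      ht h0
  rw [hfa, hf'0] at hconst
  exact rpow_eq_rpow_mul_sqrt_of_firstIntegral_eq (hpos t ht) (hfa ▸ hpos 0 h0) hconst
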